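/- arXiv:2407.16175 — 6 statements merged into one kernel-verified Lean document; each statement's English description precedes it below -/
import Mathlib

section
/- With F_{n,i} the α-Bernstein polynomials defined recursively from the starting basis F_{2,0}(z)=1-z+α(z²-z), F_{2,1}(z)=-2α(z²-z), F_{2,2}(z)=z+α(z²-z) via F_{n,i}(z)=(1-z)F_{n-1,i}(z)+zF_{n-1,i-1}(z), for every n ≥ 2 and 0 ≤ i ≤ n, F_{n,i}(z) = F_{n,n-i}(1-z) for all z. -/
/-- The recursively defined α-Bernstein polynomials: starting basis at order 2,
extended by the de Casteljau-type recursion, zero outside `0 ≤ i ≤ n`. -/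
noncomputable def F (α : ℝ) : ℕ → ℤ → ℝ → ℝ
  | 2, i, z =>
      if i = 0 then 1 - z + α * (z ^ 2 - z)
      else if i = 1 then -2 * α * (z ^ 2 - z)
      else if i = 2 then z + α * (z ^ 2 - z) else 0
  | n + 3, i, z => (1 - z) * F α (n + 2) i z + z * F α (n + 2) (i - 1) z
  | _, _, _ => 0

lemma F_symm_aux (α : ℝ) : ∀ (n : ℕ) (i : ℤ) (z : ℝ),
    F α (n + 2) i z = F α (n + 2) ((n : ℤ) + 2 - i) (1 - z) := by
  intro n
  induction n with
  | zero =>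
    intro i z
    show F α 2 i z = F α 2 (2 - i) (1 - z)
    simp only [F]
    rcases eq_or_ne i 0 with h | h0
    · subst h; norm_num; ring_nf; tauto
    rcases eq_or_ne i 1 with h | h1
    · subst h; norm_num; ring_nf; tauto
    rcases eq_or_ne i 2 with h | h2
    · subst h; norm_num; ring_nf; tauto
    · have : ¬(2 - i = 0) := by omega
      have : ¬(2 - i = 1) := by omega
      have : ¬(2 - i = 2) := by omega
      simp_all
  | succ n ih =>
    intro i z
    show F α (n + 3) i z = F α (n + 3) ((n : ℤ) + 1 + 2 - i) (1 - z)
    simp only [F]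
    have h1 := ih i z
    have h2 := ih (i - 1) z
    have e1 : (n : ℤ) + 1 + 2 - i - 1 = (n : ℤ) + 2 - i := by ring
    have e2 : (n : ℤ) + 1 + 2 - i = (n : ℤ) + 2 - (i - 1) := by ring
    rw [e1, e2, ← h1, ← h2]
    ring_nf

theorem alphaBernstein_symmetry (α : ℝ) (hα : α ∈ Set.Icc (0 : ℝ) 1)
    (n : ℕ) (hn : 2 ≤ n) (i : ℤ) (hi0 : 0 ≤ i) (hin : i ≤ (n : ℤ)) (z : ℝ) :
    F α n i z = F α n ((n : ℤ) - i) (1 - z) := by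
  obtain ⟨m, rfl⟩ : ∃ m, n = m + 2 := ⟨n - 2, by omega⟩
  have := F_symm_aux α m i z
  convert this using 3 <;> push_cast <;> ring
end

section
/- Let B_{m,j}(z) = C(m,j) z^j (1-z)^{m-j} denote the classical Bernstein polynomials. With F_{n,i} the recursively defined α-Bernstein polynomials, for every n ≥ 2 and 0 ≤ i ≤ n, F_{n,i}(z) = ∑_{j=0}^{n-2} B_{n-2,j}(z) F_{2,i-j}(z), where F_{2,k} := 0 for k ∉ {0,1,2}. -/
/-- Classical Bernstein basis polynomials. -/
noncomputable def B (m j : ℕ) (z : ℝ) : ℝ := (m.choose j : ℝ) * z ^ j * (1 - z) ^ (m - j)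

lemma B_succ_succ (m j : ℕ) (hj : j ≤ m) (z : ℝ) :
    B (m + 1) (j + 1) z = (1 - z) * B m (j + 1) z + z * B m j z := by
  unfold B
  rcases eq_or_lt_of_le hj with rfl | h
  · simp [Nat.choose_succ_self, Nat.choose_self]
    ring
  · have h1 : m + 1 - (j + 1) = m - (j + 1) + 1 := by omega
    have h2 : m - j = m - (j + 1) + 1 := by omega
    rw [Nat.choose_succ_succ, h1, h2]
    push_cast
    ring

lemma key (α : ℝ) : ∀ (m : ℕ) (i : ℤ) (z : ℝ),
    F α (m + 2) i z = ∑ j ∈ Finset.range (m + 1), B m j z * F α 2 (i - (j : ℤ)) z := by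
  intro m
  induction m with
  | zero => intro i z; simp [B]
  | succ m ih =>
    intro i z
    have hF : F α (m + 3) i z = (1 - z) * F α (m + 2) i z + z * F α (m + 2) (i - 1) z := by
      rfl
    rw [show m + 1 + 2 = m + 3 from rfl, hF, ih i z, ih (i - 1) z]
    rw [Finset.sum_range_succ' (fun j => B (m + 1) j z * F α 2 (i - (j : ℤ)) z)]
    have step : ∀ j ∈ Finset.range (m + 1),
        B (m + 1) (j + 1) z * F α 2 (i - ((j : ℤ) + 1)) z
          = (1 - z) * (B m (j + 1) z * F α 2 (i - ((j : ℤ) + 1)) z)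
            + z * (B m j z * F α 2 (i - 1 - (j : ℤ)) z) := by
      intro j hj
      rw [B_succ_succ m j (by simpa using Nat.lt_succ_iff.mp (Finset.mem_range.mp hj)) z]
      have : i - ((j : ℤ) + 1) = i - 1 - (j : ℤ) := by ring
      rw [this]; ring
    have hmain : ∑ k ∈ Finset.range (m + 1), B (m + 1) (k + 1) z * F α 2 (i - ((k : ℤ) + 1)) z
        = (1 - z) * ∑ j ∈ Finset.range (m + 1), B m (j + 1) z * F α 2 (i - ((j : ℤ) + 1)) z
          + z * ∑ j ∈ Finset.range (m + 1), B m j z * F α 2 (i - 1 - (j : ℤ)) z := by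
      rw [Finset.sum_congr rfl step, Finset.sum_add_distrib, Finset.mul_sum, Finset.mul_sum]
    push_cast
    rw [hmain]
    have h0 : B (m + 1) 0 z = (1 - z) * B m 0 z := by
      unfold B; simp; ring
    have hback : (1 - z) * ∑ j ∈ Finset.range (m + 1),
        B m (j + 1) z * F α 2 (i - ((j : ℤ) + 1)) z
        + B (m + 1) 0 z * F α 2 (i - (0 : ℤ)) z
        = (1 - z) * ∑ j ∈ Finset.range (m + 2), B m j z * F α 2 (i - (j : ℤ)) z := by
      rw [Finset.sum_range_succ' (fun j => B m j z * F α 2 (i - (j : ℤ)) z), h0]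
      push_cast
      ring
    have htrunc : ∑ j ∈ Finset.range (m + 2), B m j z * F α 2 (i - (j : ℤ)) z
        = ∑ j ∈ Finset.range (m + 1), B m j z * F α 2 (i - (j : ℤ)) z := by
      rw [Finset.sum_range_succ]
      have : B m (m + 1) z = 0 := by
        unfold B; simp [Nat.choose_succ_self]
      rw [this]; ring
    rw [htrunc] at hback
    linarith [hback]

theorem alphaBernstein_via_starting_basis (α : ℝ) (hα : α ∈ Set.Icc (0 : ℝ) 1)
    (n : ℕ) (hn : 2 ≤ n) (i : ℤ) (hi0 : 0 ≤ i) (hin : i ≤ (n : ℤ)) (z : ℝ) :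
    F α n i z = ∑ j ∈ Finset.range (n - 2 + 1), B (n - 2) j z * F α 2 (i - (j : ℤ)) z := by
  obtain ⟨m, rfl⟩ : ∃ m, n = m + 2 := ⟨n - 2, by omega⟩
  simpa using key α m i z
end

section
/- The recursively defined α-Bernstein polynomials agree with Chen's explicit formula: for n ≥ 2 and 0 ≤ k ≤ n, F_{n,k}(z) = [C(n-2,k)(1-α)z + C(n-2,k-2)(1-α)(1-z) + C(n,k)·α·z(1-z)] · z^{k-1}(1-z)^{n-k-1} for all z ∈ (0,1). -/
/-- Binomial coefficient with integer lower index, zero for negative index. -/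
noncomputable def Cz (m : ℕ) (l : ℤ) : ℝ := if 0 ≤ l then (m.choose l.toNat : ℝ) else 0

lemma Cz_pascal (m : ℕ) (l : ℤ) : Cz (m + 1) l = Cz m l + Cz m (l - 1) := by
  rcases lt_trichotomy l 0 with h | rfl | h
  · simp [Cz, h.not_ge, show ¬ (1:ℤ) ≤ l by omega]
  · simp [Cz]
  · obtain ⟨j, rfl⟩ : ∃ j : ℕ, l = (j : ℤ) + 1 := ⟨(l - 1).toNat, by omega⟩
    have h1 : ((j:ℤ) + 1).toNat = j + 1 := by omega
    have h2 : ((j:ℤ) + 1 - 1).toNat = j := by omega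
    simp only [Cz, if_pos (by omega : (0:ℤ) ≤ (j:ℤ)+1), if_pos (by omega : (0:ℤ) ≤ (j:ℤ)+1-1), h1, h2]
    rw [Nat.choose_succ_succ]
    push_cast; ring

lemma Cz_of_gt (m : ℕ) (l : ℤ) (h : (m : ℤ) < l) : Cz m l = 0 := by
  simp only [Cz, if_pos (by omega : (0:ℤ) ≤ l)]
  rw [Nat.choose_eq_zero_of_lt (by omega)]
  norm_num

lemma key_s7 (α z : ℝ) (hz0 : 0 < z) (hz1 : z < 1) :
    ∀ n, 2 ≤ n → ∀ k : ℤ, F α n k z =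
      (Cz (n - 2) k * (1 - α) * z + Cz (n - 2) (k - 2) * (1 - α) * (1 - z) +
        Cz n k * α * z * (1 - z)) * z ^ (k - 1) * (1 - z) ^ ((n : ℤ) - k - 1) := by
  have hz : z ≠ 0 := hz0.ne'
  have hz1' : (1 : ℝ) - z ≠ 0 := by linarith
  intro n hn
  induction n, hn using Nat.le_induction with
  | base =>
    intro k
    show (if k = 0 then 1 - z + α * (z ^ 2 - z)
      else if k = 1 then -2 * α * (z ^ 2 - z)
      else if k = 2 then z + α * (z ^ 2 - z) else 0) = _
    rcases eq_or_ne k 0 with rfl | h0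
    · simp only [if_pos rfl, Cz]
      norm_num
      field_simp
      ring
    rcases eq_or_ne k 1 with rfl | h1
    · simp only [if_neg h0, if_pos rfl, Cz]
      norm_num
      ring
    rcases eq_or_ne k 2 with rfl | h2
    · simp only [if_neg h0, if_neg h1, if_pos rfl, Cz, show ((2:ℤ).toNat) = 2 from rfl,
        show ((2:ℤ) - 2) = 0 from rfl]
      norm_num [Nat.choose]
      field_simp
      ring
    · simp only [if_neg h0, if_neg h1, if_neg h2]
      rcases lt_or_gt_of_ne h0 with h | h
      · simp [Cz, h.not_ge, show ¬ (2:ℤ) ≤ k by omega, show ¬ (0:ℤ) ≤ k - 2 by omega]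
      · rw [Cz_of_gt 0 k (by omega), Cz_of_gt 0 (k-2) (by omega), Cz_of_gt 2 k (by push_cast; omega)]
        ring
  | succ n hn ih =>
    intro k
    obtain ⟨m, rfl⟩ : ∃ m, n = m + 2 := ⟨n - 2, by omega⟩
    show (1 - z) * F α (m + 2) k z + z * F α (m + 2) (k - 1) z = _
    rw [ih k, ih (k - 1)]
    have e1 : (m + 2 : ℕ) - 2 = m := by omega
    have e2 : (m + 2 + 1 : ℕ) - 2 = m + 1 := by omega
    rw [e1, e2]
    have hc1 : Cz (m + 1) k = Cz m k + Cz m (k - 1) := Cz_pascal m k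
    have hc2 : Cz (m + 1) (k - 2) = Cz m (k - 2) + Cz m (k - 2 - 1) := Cz_pascal m (k - 2)
    have hc3 : Cz (m + 2 + 1) k = Cz (m + 2) k + Cz (m + 2) (k - 1) := Cz_pascal (m + 2) k
    rw [hc1, hc2, hc3]
    have hb1 : ((m + 2 + 1 : ℕ) : ℤ) - k - 1 = (((m + 2 : ℕ) : ℤ) - k - 1) + 1 := by push_cast; ring
    have hb2 : ((m + 2 : ℕ) : ℤ) - (k - 1) - 1 = (((m + 2 : ℕ) : ℤ) - k - 1) + 1 := by push_cast; ring
    have hb3 : k - 1 - 1 = k - 2 := by ring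
    rw [hb1, hb2]
    rw [zpow_add_one₀ hz1', show (k - 1 : ℤ) - 1 = k - 2 by ring]
    rw [show (k - 1 : ℤ) = (k - 2) + 1 by ring, zpow_add_one₀ hz]
    have h5 : k - 2 - 1 = k - 3 := by ring
    ring

theorem alphaBernstein_eq_chen_formula (α : ℝ) (hα : α ∈ Set.Icc (0 : ℝ) 1)
    (n : ℕ) (hn : 2 ≤ n) (k : ℤ) (hk0 : 0 ≤ k) (hkn : k ≤ (n : ℤ))
    (z : ℝ) (hz : z ∈ Set.Ioo (0 : ℝ) 1) :
    F α n k z =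
      (Cz (n - 2) k * (1 - α) * z + Cz (n - 2) (k - 2) * (1 - α) * (1 - z) +
        Cz n k * α * z * (1 - z)) * z ^ (k - 1) * (1 - z) ^ ((n : ℤ) - k - 1) := by
  exact key_s7 α z hz.1 hz.2 n hn k
end

section
/- Let F_{n,i} be the recursively defined α-Bernstein polynomials with α ∈ [0,1]. For every n ≥ 2 and every 1 ≤ i ≤ n, the tail sum k_i(z) = ∑_{j=i}^{n} F_{n,j}(z) is a monotone increasing function on [0,1]. -/
lemma F_rec (α : ℝ) (n : ℕ) (i : ℤ) (z : ℝ) :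
    F α (n + 3) i z = (1 - z) * F α (n + 2) i z + z * F α (n + 2) (i - 1) z := by
  simp [F]

lemma sum_shift (f : ℕ → ℝ) (i n : ℕ) :
    ∑ j ∈ Finset.Icc (i + 1) (n + 1), f j = ∑ j ∈ Finset.Icc i n, f (j + 1) := by
  rw [← Finset.map_add_right_Icc, Finset.sum_map]
  rfl

lemma Icc_zero_insert (n : ℕ) : Finset.Icc 0 (n + 1) = insert 0 (Finset.Icc 1 (n + 1)) := by
  ext a; simp; omega

lemma F_out (α : ℝ) (n : ℕ) (hn : 2 ≤ n) :
    ∀ i : ℤ, (i < 0 ∨ (n : ℤ) < i) → ∀ z, F α n i z = 0 := by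
  induction n, hn using Nat.le_induction with
  | base =>
      intro i h z
      simp only [F]
      rw [if_neg (by omega), if_neg (by omega), if_neg (by omega)]
  | succ n hn ih =>
      intro i h z
      obtain ⟨m, rfl⟩ : ∃ m, n = m + 2 := ⟨n - 2, by omega⟩
      rw [show m + 2 + 1 = m + 3 from rfl, F_rec, ih i (by push_cast at h ⊢; omega),
        ih (i - 1) (by push_cast at h ⊢; omega)]
      ring

lemma F_nonneg (α : ℝ) (h0 : 0 ≤ α) (h1 : α ≤ 1) (n : ℕ) (hn : 2 ≤ n) :
    ∀ i : ℤ, ∀ z : ℝ, 0 ≤ z → z ≤ 1 → 0 ≤ F α n i z := by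
  induction n, hn using Nat.le_induction with
  | base =>
      intro i z hz0 hz1
      simp only [F]
      split_ifs <;> nlinarith [mul_nonneg (mul_nonneg h0 hz0) (sub_nonneg.2 hz1),
        mul_nonneg hz0 (sub_nonneg.2 hz1)]
  | succ n hn ih =>
      intro i z hz0 hz1
      obtain ⟨m, rfl⟩ : ∃ m, n = m + 2 := ⟨n - 2, by omega⟩
      rw [show m + 2 + 1 = m + 3 from rfl, F_rec]
      have := ih i z hz0 hz1
      have := ih (i - 1) z hz0 hz1
      nlinarith

/-- tail sum -/
noncomputable def S (α : ℝ) (n i : ℕ) (z : ℝ) : ℝ := ∑ j ∈ Finset.Icc i n, F α n (j : ℤ) z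

lemma S_rec (α : ℝ) (n : ℕ) (hn : 2 ≤ n) (i : ℕ) (hi : 1 ≤ i) (hi2 : i ≤ n + 1) (z : ℝ) :
    S α (n + 1) i z = (1 - z) * S α n i z + z * S α n (i - 1) z := by
  obtain ⟨m, rfl⟩ : ∃ m, n = m + 2 := ⟨n - 2, by omega⟩
  obtain ⟨k, rfl⟩ : ∃ k, i = k + 1 := ⟨i - 1, by omega⟩
  simp only [S]
  have hrec : ∀ j ∈ Finset.Icc (k + 1) (m + 2 + 1), F α (m + 2 + 1) (j : ℤ) z
      = (1 - z) * F α (m + 2) (j : ℤ) z + z * F α (m + 2) ((j : ℤ) - 1) z := by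
    intro j hj
    exact F_rec α m (j : ℤ) z
  rw [Finset.sum_congr rfl hrec, Finset.sum_add_distrib, ← Finset.mul_sum, ← Finset.mul_sum]
  congr 1
  · congr 1
    rw [Finset.sum_Icc_succ_top (by omega), F_out α (m + 2) (by omega) _ (by push_cast; omega),
      add_zero]
  · congr 1
    rw [sum_shift, Nat.add_sub_cancel]
    apply Finset.sum_congr rfl
    intro j hj
    congr 1
    push_cast
    ring

lemma S_one (α : ℝ) (n : ℕ) (hn : 2 ≤ n) (z : ℝ) : S α n 0 z = 1 := by
  induction n, hn using Nat.le_induction with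
  | base =>
      simp only [S]
      rw [show Finset.Icc 0 2 = {0, 1, 2} from rfl]
      simp [F]
      ring
  | succ n hn ih =>
      have h := S_rec α n hn 1 le_rfl (by omega) z
      have h2 : S α (n+1) 0 z = F α (n+1) 0 z + S α (n+1) 1 z := by
        simp only [S]
        rw [Icc_zero_insert, Finset.sum_insert (by simp)]
        norm_num
      have h3 : S α n 0 z = F α n 0 z + S α n 1 z := by
        simp only [S]
        obtain ⟨p, rfl⟩ : ∃ p, n = p + 1 := ⟨n - 1, by omega⟩
        rw [Icc_zero_insert, Finset.sum_insert (by simp)]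
        norm_num
      obtain ⟨m, rfl⟩ : ∃ m, n = m + 2 := ⟨n - 2, by omega⟩
      have h4 : F α (m + 2 + 1) 0 z = (1 - z) * F α (m + 2) 0 z + z * F α (m + 2) (-1) z := by
        rw [show m + 2 + 1 = m + 3 from rfl, F_rec]; norm_num
      rw [F_out α (m+2) (by omega) (-1) (by omega) z] at h4
      have h5 : S α (m + 2) 1 z = 1 - F α (m+2) 0 z := by linarith [ih]
      rw [h2, h4, h, h5, ih]
      ring

lemma Icc_insert_bot (k n : ℕ) (h : k ≤ n) :
    Finset.Icc k n = insert k (Finset.Icc (k + 1) n) := by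
  ext a; simp; omega

lemma S_nonneg (α : ℝ) (h0 : 0 ≤ α) (h1 : α ≤ 1) (n : ℕ) (hn : 2 ≤ n) (i : ℕ)
    (z : ℝ) (hz0 : 0 ≤ z) (hz1 : z ≤ 1) : 0 ≤ S α n i z :=
  Finset.sum_nonneg fun j _ => F_nonneg α h0 h1 n hn _ z hz0 hz1

lemma S_le (α : ℝ) (h0 : 0 ≤ α) (h1 : α ≤ 1) (n : ℕ) (hn : 2 ≤ n) (k : ℕ)
    (z : ℝ) (hz0 : 0 ≤ z) (hz1 : z ≤ 1) : S α n (k + 1) z ≤ S α n k z := by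
  by_cases hk : k + 1 ≤ n
  · have : S α n k z = F α n (k : ℤ) z + S α n (k + 1) z := by
      simp only [S]
      rw [Icc_insert_bot k n (by omega), Finset.sum_insert (by simp)]
    rw [this]
    have := F_nonneg α h0 h1 n hn (k : ℤ) z hz0 hz1
    linarith
  · have : S α n (k + 1) z = 0 := by
      simp only [S]
      rw [Finset.Icc_eq_empty (by omega), Finset.sum_empty]
    rw [this]
    exact S_nonneg α h0 h1 n hn k z hz0 hz1

lemma combo {g h : ℝ → ℝ} (hg : MonotoneOn g (Set.Icc 0 1))
    (hh : MonotoneOn h (Set.Icc 0 1)) (hle : ∀ z ∈ Set.Icc (0 : ℝ) 1, g z ≤ h z) :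
    MonotoneOn (fun z => (1 - z) * g z + z * h z) (Set.Icc 0 1) := by
  intro x hx y hy hxy
  have h1 := hg hx hy hxy
  have h2 := hh hx hy hxy
  have h3 := hle x hx
  obtain ⟨hx0, hx1⟩ := hx
  obtain ⟨hy0, hy1⟩ := hy
  simp only
  nlinarith [mul_nonneg (sub_nonneg.2 hy1) (sub_nonneg.2 h1),
    mul_nonneg hy0 (sub_nonneg.2 h2), mul_nonneg (sub_nonneg.2 hxy) (sub_nonneg.2 h3)]

lemma S_mono (α : ℝ) (h0 : 0 ≤ α) (h1 : α ≤ 1) (n : ℕ) (hn : 2 ≤ n) :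
    ∀ i : ℕ, 1 ≤ i → i ≤ n → MonotoneOn (S α n i) (Set.Icc 0 1) := by
  induction n, hn using Nat.le_induction with
  | base =>
      intro i hi1 hi2
      interval_cases i
      · have : S α 2 1 = fun z => z + α * (z - z ^ 2) := by
          funext z
          simp only [S, show Finset.Icc 1 2 = {1, 2} from rfl]
          simp [F]
          ring
        rw [this]
        intro x hx y hy hxy
        obtain ⟨hx0, hx1⟩ := hx; obtain ⟨hy0, hy1⟩ := hy
        simp only
        nlinarith [mul_nonneg (sub_nonneg.2 h1) (sub_nonneg.2 hxy),
          mul_nonneg (mul_nonneg h0 (sub_nonneg.2 hxy)) (sub_nonneg.2 hy1),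
          mul_nonneg (mul_nonneg h0 (sub_nonneg.2 hxy)) hx0]
      · have : S α 2 2 = fun z => z + α * (z ^ 2 - z) := by
          funext z
          simp only [S, show Finset.Icc 2 2 = {2} from rfl]
          simp [F]
        rw [this]
        intro x hx y hy hxy
        obtain ⟨hx0, hx1⟩ := hx; obtain ⟨hy0, hy1⟩ := hy
        simp only
        nlinarith [mul_nonneg (sub_nonneg.2 h1) (sub_nonneg.2 hxy),
          mul_nonneg (mul_nonneg h0 (sub_nonneg.2 hxy)) (sub_nonneg.2 hy1),
          mul_nonneg (mul_nonneg h0 (sub_nonneg.2 hxy)) hx0]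
  | succ n hn ih =>
      intro i hi1 hi2
      have heq : S α (n + 1) i = fun z => (1 - z) * S α n i z + z * S α n (i - 1) z :=
        funext fun z => S_rec α n hn i hi1 hi2 z
      rw [heq]
      obtain ⟨k, rfl⟩ : ∃ k, i = k + 1 := ⟨i - 1, by omega⟩
      have hg : MonotoneOn (S α n (k + 1)) (Set.Icc 0 1) := by
        by_cases hk : k + 1 ≤ n
        · exact ih (k + 1) (by omega) hk
        · have : S α n (k + 1) = fun _ => 0 := by
            funext z
            simp only [S]
            rw [Finset.Icc_eq_empty (by omega), Finset.sum_empty]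
          rw [this]
          exact monotoneOn_const
      have hh : MonotoneOn (S α n (k + 1 - 1)) (Set.Icc 0 1) := by
        rcases Nat.eq_zero_or_pos k with hk | hk
        · subst hk
          have : S α n 0 = fun _ => 1 := funext fun z => S_one α n hn z
          simp only [Nat.add_sub_cancel]
          rw [this]
          exact monotoneOn_const
        · simp only [Nat.add_sub_cancel]
          exact ih k (by omega) (by omega)
      simp only [Nat.add_sub_cancel] at hh ⊢
      exact combo hg hh fun z hz => S_le α h0 h1 n hn k z hz.1 hz.2

theorem alphaBernstein_tail_sum_monotone (α : ℝ) (hα : α ∈ Set.Icc (0 : ℝ) 1)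
    (n : ℕ) (hn : 2 ≤ n) (i : ℕ) (hi1 : 1 ≤ i) (hin : i ≤ n) :
    MonotoneOn (fun z : ℝ => ∑ j ∈ Finset.Icc i n, F α n (j : ℤ) z) (Set.Icc 0 1) := by
  exact S_mono α hα.1 hα.2 n hn i hi1 hin
end

section
/- If q : [0,1] → ℝ is monotone increasing, then for every n ≥ 2 the α-Bernstein approximation z ↦ ∑_{i=0}^{n} q(i/n) F_{n,i}(z) is monotone increasing on [0,1]. -/
namespace AlphaBernsteinAux

lemma F_two (α : ℝ) (i : ℤ) (z : ℝ) :
    F α 2 i z = if i = 0 then 1 - z + α * (z ^ 2 - z)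
      else if i = 1 then -2 * α * (z ^ 2 - z)
      else if i = 2 then z + α * (z ^ 2 - z) else 0 := rfl

lemma F_succ (α : ℝ) (n : ℕ) (hn : 2 ≤ n) (i : ℤ) (z : ℝ) :
    F α (n + 1) i z = (1 - z) * F α n i z + z * F α n (i - 1) z := by
  obtain ⟨m, rfl⟩ : ∃ m, n = m + 2 := ⟨n - 2, by omega⟩
  rfl

lemma F_out (α : ℝ) : ∀ n : ℕ, 2 ≤ n → ∀ i : ℤ, (i < 0 ∨ (n : ℤ) < i) → ∀ z : ℝ, F α n i z = 0 := by
  intro n hn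
  induction n, hn using Nat.le_induction with
  | base =>
      intro i hi z
      have h0 : i ≠ 0 := by omega
      have h1 : i ≠ 1 := by omega
      have h2 : i ≠ 2 := by omega
      simp [F_two, h0, h1, h2]
  | succ n hn ih =>
      intro i hi z
      rw [F_succ α n hn, ih i (by omega), ih (i - 1) (by omega)]
      ring

lemma F_nonneg (α : ℝ) (hα : α ∈ Set.Icc (0 : ℝ) 1) :
    ∀ n, 2 ≤ n → ∀ (i : ℤ) (z : ℝ), z ∈ Set.Icc (0 : ℝ) 1 → 0 ≤ F α n i z := by
  obtain ⟨hα0, hα1⟩ := hα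
  intro n hn
  induction n, hn using Nat.le_induction with
  | base =>
      intro i z hz
      obtain ⟨hz0, hz1⟩ := hz
      rw [F_two]
      split_ifs
      · nlinarith [mul_nonneg (sub_nonneg.2 hz1) (sub_nonneg.2 hα1)]
      · nlinarith [mul_nonneg hα0 (mul_nonneg hz0 (sub_nonneg.2 hz1))]
      · nlinarith [mul_nonneg hz0 (sub_nonneg.2 hα1), mul_nonneg hα0 (mul_nonneg hz0 hz0)]
      · exact le_refl 0
  | succ n hn ih =>
      intro i z hz
      rw [F_succ α n hn]
      have h1 : (0:ℝ) ≤ 1 - z := by linarith [hz.2]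
      exact add_nonneg (mul_nonneg h1 (ih i z hz)) (mul_nonneg hz.1 (ih (i - 1) z hz))

/-- Tail sums of the α-Bernstein basis. -/
noncomputable def T (α : ℝ) (n : ℕ) (i : ℤ) (z : ℝ) : ℝ :=
  ∑ j ∈ Finset.Icc i (n : ℤ), F α n j z

lemma T_sub (α : ℝ) (n : ℕ) (hn : 2 ≤ n) (i : ℤ) (z : ℝ) :
    T α n (i - 1) z - T α n i z = F α n (i - 1) z := by
  unfold T
  by_cases h : i - 1 ≤ (n : ℤ)
  · have hins : Finset.Icc (i - 1) (n : ℤ) = insert (i - 1) (Finset.Icc i (n : ℤ)) := by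
      ext j
      simp only [Finset.mem_Icc, Finset.mem_insert]
      omega
    have hnm : (i - 1) ∉ Finset.Icc i (n : ℤ) := by
      simp only [Finset.mem_Icc]; omega
    rw [hins, Finset.sum_insert hnm]
    ring
  · rw [Finset.Icc_eq_empty (by omega), Finset.Icc_eq_empty (by omega),
      F_out α n hn (i - 1) (by omega)]
    simp

lemma T_rec (α : ℝ) (n : ℕ) (hn : 2 ≤ n) (i : ℤ) (z : ℝ) :
    T α (n + 1) i z = (1 - z) * T α n i z + z * T α n (i - 1) z := by
  unfold T
  push_cast
  rw [Finset.sum_congr rfl (fun j _ => F_succ α n hn j z), Finset.sum_add_distrib,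
    ← Finset.mul_sum, ← Finset.mul_sum]
  congr 1
  · congr 1
    symm
    apply Finset.sum_subset
    · intro j hj
      simp only [Finset.mem_Icc] at hj ⊢
      omega
    · intro j hj hj'
      simp only [Finset.mem_Icc] at hj hj'
      exact F_out α n hn j (by omega) z
  · congr 1
    have hmap : Finset.Icc i ((n : ℤ) + 1) =
        Finset.map ⟨fun j => j + 1, add_left_injective 1⟩ (Finset.Icc (i - 1) (n : ℤ)) := by
      ext j
      simp only [Finset.mem_Icc, Finset.mem_map, Function.Embedding.coeFn_mk]
      constructor
      · intro h; exact ⟨j - 1, by omega, by omega⟩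
      · rintro ⟨a, ha, rfl⟩; omega
    rw [hmap, Finset.sum_map]
    simp

lemma T_two (α : ℝ) (i : ℤ) (z : ℝ) :
    T α 2 i z = if i ≤ 0 then 1
      else if i = 1 then z + α * z - α * z ^ 2
      else if i = 2 then z + α * (z ^ 2 - z) else 0 := by
  unfold T
  simp only [Nat.cast_ofNat]
  have h012 : Finset.Icc (0 : ℤ) 2 = {0, 1, 2} := rfl
  split_ifs with h0 h1 h2
  · have hsub : Finset.Icc (0 : ℤ) 2 ⊆ Finset.Icc i 2 := by
      apply Finset.Icc_subset_Icc h0 le_rfl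
    rw [← Finset.sum_subset hsub (fun j hj hj' => by
      simp only [Finset.mem_Icc] at hj hj'
      exact F_out α 2 le_rfl j (by omega) z)]
    rw [h012]
    simp [F_two]
    ring
  · have : Finset.Icc (1 : ℤ) 2 = {1, 2} := rfl
    rw [h1, this]
    simp [F_two]
    ring
  · have : Finset.Icc (2 : ℤ) 2 = {2} := rfl
    rw [h2, this]
    simp [F_two]
  · rw [Finset.Icc_eq_empty (by omega)]
    simp

lemma T_top (α : ℝ) (n : ℕ) (i : ℤ) (hi : (n : ℤ) < i) (z : ℝ) : T α n i z = 0 := by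
  unfold T
  rw [Finset.Icc_eq_empty (by omega)]
  simp

lemma T_zero (α : ℝ) : ∀ n, 2 ≤ n → ∀ z : ℝ, T α n 0 z = 1 := by
  intro n hn
  induction n, hn using Nat.le_induction with
  | base => intro z; rw [T_two]; simp
  | succ n hn ih =>
      intro z
      have hsub := T_sub α n hn 0 z
      rw [F_out α n hn (0 - 1) (by omega) z] at hsub
      rw [T_rec α n hn 0 z, ih z]
      have : T α n (0 - 1) z = 1 := by rw [ih z] at hsub; linarith
      rw [this]
      ring

/-- Recursive formula for the derivative of the tails. -/
noncomputable def Dv (α : ℝ) : ℕ → ℤ → ℝ → ℝ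
  | 2, i, z =>
      if i ≤ 0 then 0
      else if i = 1 then 1 + α - 2 * α * z
      else if i = 2 then 1 - α + 2 * α * z else 0
  | n + 3, i, z => F α (n + 2) (i - 1) z + (1 - z) * Dv α (n + 2) i z + z * Dv α (n + 2) (i - 1) z
  | _, _, _ => 0

lemma Dv_two (α : ℝ) (i : ℤ) (z : ℝ) :
    Dv α 2 i z = if i ≤ 0 then 0
      else if i = 1 then 1 + α - 2 * α * z
      else if i = 2 then 1 - α + 2 * α * z else 0 := rfl

lemma Dv_succ (α : ℝ) (n : ℕ) (hn : 2 ≤ n) (i : ℤ) (z : ℝ) :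
    Dv α (n + 1) i z = F α n (i - 1) z + (1 - z) * Dv α n i z + z * Dv α n (i - 1) z := by
  obtain ⟨m, rfl⟩ : ∃ m, n = m + 2 := ⟨n - 2, by omega⟩
  rfl

lemma hasDerivAt_T (α : ℝ) :
    ∀ n, 2 ≤ n → ∀ (i : ℤ) (z : ℝ), HasDerivAt (fun w => T α n i w) (Dv α n i z) z := by
  intro n hn
  induction n, hn using Nat.le_induction with
  | base =>
      intro i z
      have hfun : (fun w => T α 2 i w) = fun w =>
          if i ≤ 0 then (1 : ℝ)
          else if i = 1 then w + α * w - α * w ^ 2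
          else if i = 2 then w + α * (w ^ 2 - w) else 0 := by
        funext w; rw [T_two]
      rw [hfun, Dv_two]
      split_ifs
      · exact hasDerivAt_const z 1
      · have h := ((hasDerivAt_id z).add ((hasDerivAt_id z).const_mul α)).sub
          ((hasDerivAt_pow 2 z).const_mul α)
        exact h.congr_deriv (by norm_num; ring)
      · have h := (hasDerivAt_id z).add
          (((hasDerivAt_pow 2 z).sub (hasDerivAt_id z)).const_mul α)
        exact h.congr_deriv (by norm_num; ring)
      · exact hasDerivAt_const z 0
  | succ n hn ih =>
      intro i z
      have hfun : (fun w => T α (n + 1) i w) =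
          fun w => (1 - w) * T α n i w + w * T α n (i - 1) w := by
        funext w; rw [T_rec α n hn]
      rw [hfun]
      have h := (((hasDerivAt_const z (1 : ℝ)).sub (hasDerivAt_id z)).mul (ih i z)).add
        ((hasDerivAt_id z).mul (ih (i - 1) z))
      refine h.congr_deriv ?_
      rw [Dv_succ α n hn, ← T_sub α n hn i z]
      simp only [id_eq, Pi.sub_apply]
      ring

lemma Dv_nonneg (α : ℝ) (hα : α ∈ Set.Icc (0 : ℝ) 1) :
    ∀ n, 2 ≤ n → ∀ (i : ℤ) (z : ℝ), z ∈ Set.Icc (0 : ℝ) 1 → 0 ≤ Dv α n i z := by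
  obtain ⟨hα0, hα1⟩ := hα
  intro n hn
  induction n, hn using Nat.le_induction with
  | base =>
      intro i z hz
      obtain ⟨hz0, hz1⟩ := hz
      rw [Dv_two]
      split_ifs
      · exact le_refl 0
      · nlinarith [mul_nonneg hα0 (sub_nonneg.2 hz1)]
      · nlinarith [mul_nonneg hα0 hz0]
      · exact le_refl 0
  | succ n hn ih =>
      intro i z hz
      rw [Dv_succ α n hn]
      have h1 : (0:ℝ) ≤ 1 - z := by linarith [hz.2]
      exact add_nonneg (add_nonneg (F_nonneg α ⟨hα0, hα1⟩ n hn (i - 1) z hz)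
        (mul_nonneg h1 (ih i z hz))) (mul_nonneg hz.1 (ih (i - 1) z hz))

lemma T_mono (α : ℝ) (hα : α ∈ Set.Icc (0 : ℝ) 1) (n : ℕ) (hn : 2 ≤ n) (i : ℤ) :
    MonotoneOn (fun z => T α n i z) (Set.Icc (0 : ℝ) 1) := by
  apply monotoneOn_of_deriv_nonneg (convex_Icc 0 1)
  · exact fun z _ => (hasDerivAt_T α n hn i z).continuousAt.continuousWithinAt
  · exact fun z _ => (hasDerivAt_T α n hn i z).differentiableAt.differentiableWithinAt
  · intro z hz
    rw [interior_Icc] at hz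
    rw [(hasDerivAt_T α n hn i z).deriv]
    exact Dv_nonneg α hα n hn i z ⟨le_of_lt hz.1, le_of_lt hz.2⟩

/-- Abel summation identity. -/
lemma abel_id (a g : ℕ → ℝ) (n : ℕ) :
    ∑ i ∈ Finset.range (n + 1), a i * (g i - g (i + 1)) =
      a 0 * g 0 - a n * g (n + 1) + ∑ i ∈ Finset.range n, (a (i + 1) - a i) * g (i + 1) := by
  induction n with
  | zero => simp; ring
  | succ n ih =>
      rw [Finset.sum_range_succ, ih, Finset.sum_range_succ (f := fun i => (a (i+1) - a i) * g (i+1))]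
      ring

end AlphaBernsteinAux

open AlphaBernsteinAux in
theorem alphaBernstein_operator_monotone (α : ℝ) (hα : α ∈ Set.Icc (0 : ℝ) 1)
    (n : ℕ) (hn : 2 ≤ n) (q : ℝ → ℝ) (hq : MonotoneOn q (Set.Icc 0 1)) :
    MonotoneOn (fun z : ℝ => ∑ i ∈ Finset.range (n + 1), q ((i : ℝ) / n) * F α n (i : ℤ) z)
      (Set.Icc 0 1) := by
  intro z1 h1 z2 h2 h12
  simp only
  set a : ℕ → ℝ := fun i => q ((i : ℝ) / n) with ha
  set g : ℕ → ℝ := fun i => T α n (i : ℤ) z2 - T α n (i : ℤ) z1 with hg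
  have hF : ∀ i : ℕ, F α n (i : ℤ) z2 - F α n (i : ℤ) z1 = g i - g (i + 1) := by
    intro i
    have h2' := T_sub α n hn ((i : ℤ) + 1) z2
    have h1' := T_sub α n hn ((i : ℤ) + 1) z1
    simp only [add_sub_cancel_right] at h2' h1'
    simp only [hg]
    push_cast
    linarith
  have key : ∑ i ∈ Finset.range (n + 1), q ((i : ℝ) / n) * F α n (i : ℤ) z2 -
      ∑ i ∈ Finset.range (n + 1), q ((i : ℝ) / n) * F α n (i : ℤ) z1 =
      ∑ i ∈ Finset.range (n + 1), a i * (g i - g (i + 1)) := by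
    rw [← Finset.sum_sub_distrib]
    apply Finset.sum_congr rfl
    intro i _
    rw [← hF i]
    ring
  rw [abel_id a g n] at key
  have hg0 : g 0 = 0 := by
    simp only [hg, Int.natCast_zero, T_zero α n hn]
    ring
  have hgn : g (n + 1) = 0 := by
    simp only [hg]
    rw [T_top α n ((n : ℕ) + 1 : ℕ) (by push_cast; omega) z2,
      T_top α n ((n : ℕ) + 1 : ℕ) (by push_cast; omega) z1]
    ring
  have hpos : 0 ≤ ∑ i ∈ Finset.range n, (a (i + 1) - a i) * g (i + 1) := by
    apply Finset.sum_nonneg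
    intro i hi
    rw [Finset.mem_range] at hi
    have hn0 : (0 : ℝ) < n := by positivity
    have hmem1 : (i : ℝ) / n ∈ Set.Icc (0 : ℝ) 1 := by
      constructor
      · positivity
      · rw [div_le_one hn0]; exact_mod_cast Nat.le_of_lt_succ (by omega)
    have hmem2 : ((i : ℝ) + 1) / n ∈ Set.Icc (0 : ℝ) 1 := by
      constructor
      · positivity
      · rw [div_le_one hn0]; exact_mod_cast (by omega : i + 1 ≤ n)
    have haq : a i ≤ a (i + 1) := by
      simp only [ha]
      push_cast
      exact hq hmem1 hmem2 ((div_le_div_iff_of_pos_right hn0).2 (by linarith))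
    have hgq : 0 ≤ g (i + 1) := by
      simp only [hg, sub_nonneg]
      exact T_mono α hα n hn ((i : ℕ) + 1 : ℕ) h1 h2 h12
    exact mul_nonneg (by linarith) hgq
  rw [hg0, hgn] at key
  simp only [mul_zero, sub_zero, zero_add] at key
  linarith [key, hpos]
end

section
/- Define B_n^α(f; z) = ∑_{i=0}^{n} F_{n,i}(z) f(i/n). For all j ≥ 0, n ≥ 3, α ∈ [0,1], z ∈ [0,1]: B_n^α(t^{j+1}; z) = (1 - 1/n)^{j+1} [ (1-z) B_{n-1}^α(t^{j+1}; z) + z ∑_{k=0}^{j+1} C(j+1,k) (n-1)^{-k} B_{n-1}^α(t^{j+1-k}; z) ]. -/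
/-- The α-Bernstein operator applied to the monomial `t ^ m`, evaluated at `z`. -/
noncomputable def Bop (α : ℝ) (n m : ℕ) (z : ℝ) : ℝ :=
  ∑ i ∈ Finset.range (n + 1), ((i : ℝ) / n) ^ m * F α n (i : ℤ) z

lemma F_zero (α z : ℝ) : ∀ (n : ℕ) (i : ℤ), (i < 0 ∨ (n : ℤ) < i) → F α n i z = 0
  | 0, i, _ => by simp [F]
  | 1, i, _ => by simp [F]
  | 2, i, h => by
      have h0 : i ≠ 0 := by omega
      have h1 : i ≠ 1 := by omega
      have h2 : i ≠ 2 := by omega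
      simp [F, h0, h1, h2]
  | (n+3), i, h => by
      have h1 : F α (n+2) i z = 0 := F_zero α z (n+2) i (by omega)
      have h2 : F α (n+2) (i-1) z = 0 := F_zero α z (n+2) (i-1) (by omega)
      simp [F, h1, h2]

theorem alphaBernstein_moment_recurrence (α : ℝ) (hα : α ∈ Set.Icc (0 : ℝ) 1)
    (j : ℕ) (n : ℕ) (hn : 3 ≤ n) (z : ℝ) (hz : z ∈ Set.Icc (0 : ℝ) 1) :
    Bop α n (j + 1) z =
      (1 - 1 / (n : ℝ)) ^ (j + 1) *
        ((1 - z) * Bop α (n - 1) (j + 1) z +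
          z * ∑ k ∈ Finset.range (j + 2),
            ((j + 1).choose k : ℝ) * (1 / ((n : ℝ) - 1)) ^ k * Bop α (n - 1) (j + 1 - k) z) := by
  obtain ⟨N, rfl⟩ : ∃ N, n = N + 3 := ⟨n - 3, by omega⟩
  have hN2 : ((N : ℝ) + 2) ≠ 0 := by positivity
  have hN3 : ((N : ℝ) + 3) ≠ 0 := by positivity
  have hsub : N + 3 - 1 = N + 2 := rfl
  set c : ℝ := ((N : ℝ) + 2) / ((N : ℝ) + 3) with hc
  have hBop : ∀ m : ℕ, Bop α (N + 2) m z
      = ∑ i ∈ Finset.range (N + 3), ((i : ℝ) / ((N : ℝ) + 2)) ^ m * F α (N + 2) (i : ℤ) z := by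
    intro m
    unfold Bop
    norm_num
  have expand : Bop α (N + 3) (j + 1) z =
      (1 - z) * ∑ i ∈ Finset.range (N + 4), ((i : ℝ) / ((N : ℝ) + 3)) ^ (j + 1) * F α (N + 2) (i : ℤ) z
      + z * ∑ i ∈ Finset.range (N + 4), ((i : ℝ) / ((N : ℝ) + 3)) ^ (j + 1) * F α (N + 2) ((i : ℤ) - 1) z := by
    unfold Bop
    rw [Finset.mul_sum, Finset.mul_sum, ← Finset.sum_add_distrib]
    apply Finset.sum_congr rfl
    intro i _
    show ((i : ℝ) / ((N + 3 : ℕ) : ℝ)) ^ (j + 1) * ((1 - z) * F α (N + 2) (i : ℤ) z + z * F α (N + 2) ((i : ℤ) - 1) z) = _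
    push_cast
    ring
  have S1 : ∑ i ∈ Finset.range (N + 4), ((i : ℝ) / ((N : ℝ) + 3)) ^ (j + 1) * F α (N + 2) (i : ℤ) z
      = c ^ (j + 1) * Bop α (N + 2) (j + 1) z := by
    rw [Finset.sum_range_succ, F_zero α z (N + 2) (((N + 3 : ℕ) : ℤ)) (by push_cast; omega), mul_zero, add_zero,
      hBop, Finset.mul_sum]
    apply Finset.sum_congr rfl
    intro i _
    have hdiv : (i : ℝ) / ((N : ℝ) + 3) = c * ((i : ℝ) / ((N : ℝ) + 2)) := by
      rw [hc]; field_simp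
    rw [hdiv, mul_pow]; ring
  have S2 : ∑ i ∈ Finset.range (N + 4), ((i : ℝ) / ((N : ℝ) + 3)) ^ (j + 1) * F α (N + 2) ((i : ℤ) - 1) z
      = c ^ (j + 1) * ∑ k ∈ Finset.range (j + 2),
          ((j + 1).choose k : ℝ) * (1 / ((N : ℝ) + 2)) ^ k * Bop α (N + 2) (j + 1 - k) z := by
    rw [Finset.sum_range_succ']
    have h0 : (((0 : ℕ) : ℝ) / ((N : ℝ) + 3)) ^ (j + 1) * F α (N + 2) (((0 : ℕ) : ℤ) - 1) z = 0 := by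
      norm_num
    rw [h0, add_zero]
    have key : ∀ i ∈ Finset.range (N + 3),
        (((i + 1 : ℕ) : ℝ) / ((N : ℝ) + 3)) ^ (j + 1) * F α (N + 2) (((i + 1 : ℕ) : ℤ) - 1) z
        = ∑ k ∈ Finset.range (j + 2),
            c ^ (j + 1) * (((j + 1).choose k : ℝ) * (1 / ((N : ℝ) + 2)) ^ k
              * (((i : ℝ) / ((N : ℝ) + 2)) ^ (j + 1 - k) * F α (N + 2) (i : ℤ) z)) := by
      intro i _
      have hcast : (((i + 1 : ℕ) : ℤ) - 1) = (i : ℤ) := by push_cast; ring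
      rw [hcast]
      have hdiv : ((i + 1 : ℕ) : ℝ) / ((N : ℝ) + 3)
          = c * (1 / ((N : ℝ) + 2) + (i : ℝ) / ((N : ℝ) + 2)) := by
        rw [hc]
        push_cast
        field_simp
        ring
      rw [hdiv, mul_pow, add_pow, Finset.mul_sum, Finset.sum_mul]
      exact Finset.sum_congr rfl fun k _ => by ring
    rw [Finset.sum_congr rfl key, Finset.sum_comm, Finset.mul_sum]
    apply Finset.sum_congr rfl
    intro k _
    rw [hBop, Finset.mul_sum, Finset.mul_sum]
  rw [hsub, expand, S1, S2]
  have hc' : 1 - 1 / (((N + 3 : ℕ) : ℝ)) = c := by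
    rw [hc]
    push_cast
    field_simp
    ring
  have hd : (((N + 3 : ℕ) : ℝ)) - 1 = (N : ℝ) + 2 := by push_cast; ring_nf
  rw [hc', hd]
  ring
end
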